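/- Let G be a connected 3-regular graph. Then τ(G) = 1/3 if and only if there exists a vertex v of G with ω(G−{v}) ≥ 3 (in which case necessarily ω(G−{v}) = 3). -/
import Mathlib

open SimpleGraph
open scoped ENNReal Classical

namespace Toughness

variable {V : Type*}

noncomputable def numComp (G : SimpleGraph V) (S : Set V) : ℕ :=
  Nat.card (G.induce Sᶜ).ConnectedComponent


def IsCutset (G : SimpleGraph V) (S : Set V) : Prop :=
  1 < numComp G S

def IsTough (t : ℝ) (G : SimpleGraph V) : Prop :=
  ∀ S : Set V, IsCutset G S → t * (numComp G S : ℝ) ≤ (S.ncard : ℝ)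

noncomputable def toughness (G : SimpleGraph V) : ℝ≥0∞ :=
  ⨅ (S : Set V) (_ : IsCutset G S), (S.ncard : ℝ≥0∞) / (numComp G S : ℝ≥0∞)

section Key

variable [Fintype V] {G : SimpleGraph V} [DecidableRel G.Adj]

omit [Fintype V] [DecidableRel G.Adj] in
lemma walk_cross {S : Set V} : ∀ {x y : V}, G.Walk x y → ∀ (hx : x ∈ Sᶜ), y ∈ S →
    ∃ (s w : V) (hw : w ∈ Sᶜ), s ∈ S ∧ G.Adj s w ∧
      (G.induce Sᶜ).Reachable ⟨x, hx⟩ ⟨w, hw⟩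
  | x, _, Walk.nil, hx, hy => absurd hy hx
  | x, y, Walk.cons (v := a) h q, hx, hy => by
    by_cases ha : a ∈ S
    · exact ⟨a, x, hx, ha, h.symm, Reachable.refl _⟩
    · obtain ⟨s, w, hw, hs, hadj, hr⟩ := walk_cross q ha hy
      refine ⟨s, w, hw, hs, hadj, Reachable.trans ?_ hr⟩
      exact Adj.reachable (by simp [h] : (G.induce Sᶜ).Adj ⟨x, hx⟩ ⟨a, ha⟩)

lemma key (hconn : G.Connected) (hreg : G.IsRegularOfDegree 3) (S : Set V) (hS : S.Nonempty) :
    numComp G S ≤ 3 * S.ncard ∧ (numComp G S = 3 * S.ncard → ∃ v, S = {v}) := by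
  classical
  set H := G.induce Sᶜ with hH
  set Q : H.ConnectedComponent → V × V → Prop :=
    fun C p => p.1 ∈ S ∧ ∃ hw : p.2 ∈ Sᶜ, G.Adj p.1 p.2 ∧ H.connectedComponentMk ⟨p.2, hw⟩ = C
    with hQ
  have hex : ∀ C, ∃ p, Q C p := by
    intro C
    obtain ⟨z, hz⟩ := C.exists_rep
    obtain ⟨s0, hs0⟩ := hS
    obtain ⟨pw⟩ := hconn.preconnected z.1 s0
    obtain ⟨s, w, hw, hs, hadj, hr⟩ := walk_cross pw z.2 hs0
    refine ⟨(s, w), hs, hw, hadj, ?_⟩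
    rw [← hz]
    exact (ConnectedComponent.eq.2 hr.symm).trans (congrArg _ (by ext; rfl))
  set Φ : H.ConnectedComponent → V × V := fun C => (hex C).choose with hΦdef
  have hΦ : ∀ C, Q C (Φ C) := fun C => (hex C).choose_spec
  set Pset : Finset (V × V) :=
    Finset.univ.filter (fun p => p.1 ∈ S ∧ p.2 ∉ S ∧ G.Adj p.1 p.2) with hPdef
  have hmemPset : ∀ p : V × V, p ∈ Pset ↔ p.1 ∈ S ∧ p.2 ∉ S ∧ G.Adj p.1 p.2 := by
    intro p; simp [hPdef]
  have hmemP : ∀ {p : V × V} {C}, Q C p → p ∈ Pset := by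
    rintro p C ⟨h1, h2, h3, _⟩
    exact (hmemPset p).2 ⟨h1, h2, h3⟩
  set Φ' : H.ConnectedComponent → ↥Pset := fun C => ⟨Φ C, hmemP (hΦ C)⟩ with hΦ'def
  have hΦinj : Function.Injective Φ' := by
    intro C C' h
    have hval : Φ C = Φ C' := congrArg Subtype.val h
    obtain ⟨_, hw, _, hc⟩ := hΦ C
    obtain ⟨_, hw', _, hc'⟩ := hΦ C'
    rw [← hc, ← hc']
    congr 1
    exact Subtype.ext (congrArg Prod.snd hval)
  have hcard1 : numComp G S ≤ Pset.card := by
    rw [numComp, Nat.card_eq_fintype_card, ← Fintype.card_coe]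
    exact Fintype.card_le_of_injective Φ' hΦinj
  have hfib : Pset.card = ∑ s ∈ S.toFinset, (Pset.filter (fun p => p.1 = s)).card := by
    apply Finset.card_eq_sum_card_fiberwise
    intro p hp
    exact Set.mem_toFinset.2 ((hmemPset p).1 hp).1
  have hinjOn : ∀ s : V, Set.InjOn Prod.snd ((Pset.filter (fun p => p.1 = s) : Finset (V × V)) : Set (V × V)) := by
    intro s p hp q hq hpq
    simp only [Finset.coe_filter, Set.mem_setOf_eq] at hp hq
    exact Prod.ext (hp.2.trans hq.2.symm) hpq
  have hsub : ∀ s : V, ((Pset.filter (fun p => p.1 = s)).image Prod.snd) ⊆ G.neighborFinset s := by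
    intro s w' hw'
    obtain ⟨p, hp, rfl⟩ := Finset.mem_image.1 hw'
    rw [Finset.mem_filter] at hp
    rw [SimpleGraph.mem_neighborFinset, ← hp.2]
    exact ((hmemPset p).1 hp.1).2.2
  have hfible : ∀ s ∈ S.toFinset, (Pset.filter (fun p => p.1 = s)).card ≤ 3 := by
    intro s _
    have h1 : (Pset.filter (fun p => p.1 = s)).card ≤ (G.neighborFinset s).card := by
      apply Finset.card_le_card_of_injOn Prod.snd _ (hinjOn s)
      intro p hp
      exact hsub s (Finset.mem_image_of_mem _ hp)
    rwa [SimpleGraph.card_neighborFinset_eq_degree, hreg s] at h1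
  have hcard2 : Pset.card ≤ 3 * S.ncard := by
    rw [hfib]
    calc ∑ s ∈ S.toFinset, (Pset.filter (fun p => p.1 = s)).card
        ≤ ∑ _s ∈ S.toFinset, 3 := Finset.sum_le_sum hfible
      _ = 3 * S.ncard := by
          rw [Finset.sum_const, smul_eq_mul, Set.ncard_eq_toFinset_card', mul_comm]
  refine ⟨hcard1.trans hcard2, ?_⟩
  intro heq
  have hPcard : Pset.card = 3 * S.ncard := le_antisymm hcard2 (heq ▸ hcard1)
  have hind : ∀ s ∈ S, ∀ w, G.Adj s w → w ∉ S := by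
    have hall : ∀ s ∈ S.toFinset, (Pset.filter (fun p => p.1 = s)).card = 3 := by
      rw [← Finset.sum_eq_sum_iff_of_le hfible]
      rw [← hfib, hPcard, Finset.sum_const, smul_eq_mul, Set.ncard_eq_toFinset_card', mul_comm]
    intro s hs w hadj hwS
    have hsF : s ∈ S.toFinset := Set.mem_toFinset.2 hs
    have himg : ((Pset.filter (fun p => p.1 = s)).image Prod.snd) = G.neighborFinset s := by
      apply Finset.eq_of_subset_of_card_le (hsub s)
      rw [Finset.card_image_of_injOn (hinjOn s), hall s hsF,
        SimpleGraph.card_neighborFinset_eq_degree, hreg s]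
    have : w ∈ ((Pset.filter (fun p => p.1 = s)).image Prod.snd) := by
      rw [himg, SimpleGraph.mem_neighborFinset]; exact hadj
    obtain ⟨p, hp, hpw⟩ := Finset.mem_image.1 this
    rw [Finset.mem_filter] at hp
    exact ((hmemPset p).1 hp.1).2.1 (hpw ▸ hwS)
  have hbij : Function.Bijective Φ' := by
    rw [Fintype.bijective_iff_injective_and_card]
    refine ⟨hΦinj, ?_⟩
    rw [Fintype.card_coe, hPcard, ← heq, numComp, Nat.card_eq_fintype_card]
  have huniq : ∀ C p, Q C p → p = Φ C := by
    intro C p hQp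
    have hpP : p ∈ Pset := hmemP hQp
    obtain ⟨C', hC'⟩ := hbij.2 ⟨p, hpP⟩
    have hval : Φ C' = p := congrArg Subtype.val hC'
    obtain ⟨_, hw', _, hc'⟩ := hΦ C'
    obtain ⟨_, hw, _, hc⟩ := hQp
    have : C' = C := by
      rw [← hc', ← hc]
      congr 1
      exact Subtype.ext (congrArg Prod.snd hval)
    rw [← this, hval]
  set b : V → V := fun v => if h : v ∈ Sᶜ then (Φ (H.connectedComponentMk ⟨v, h⟩)).1 else v
    with hbdef
  have hbS : ∀ u ∈ S, b u = u := by
    intro u hu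
    have : ¬ (u ∈ Sᶜ) := fun h => h hu
    simp only [hbdef]
    rw [dif_neg this]
  have hb : ∀ u w, G.Adj u w → b u = b w := by
    have hmain : ∀ u w, G.Adj u w → u ∈ S → b u = b w := by
      intro u w hadj hu
      have hwc : w ∈ Sᶜ := hind u hu w hadj
      have huniq' : (u, w) = Φ (H.connectedComponentMk ⟨w, hwc⟩) :=
        huniq _ _ ⟨hu, hwc, hadj, rfl⟩
      have hbw : b w = u := by
        simp only [hbdef]
        rw [dif_pos hwc, ← huniq']
      rw [hbS u hu, hbw]
    intro u w hadj
    by_cases hu : u ∈ S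
    · exact hmain u w hadj hu
    · by_cases hw : w ∈ S
      · exact (hmain w u hadj.symm hw).symm
      · have hu' : u ∈ Sᶜ := hu
        have hw' : w ∈ Sᶜ := hw
        have hcc : H.connectedComponentMk ⟨u, hu'⟩ = H.connectedComponentMk ⟨w, hw'⟩ :=
          ConnectedComponent.eq.2 (Adj.reachable (by simp [hH, hadj] : H.Adj ⟨u, hu'⟩ ⟨w, hw'⟩))
        simp only [hbdef]
        rw [dif_pos hu', dif_pos hw', hcc]
  have hconst : ∀ x y : V, b x = b y := by
    have hwalk : ∀ x y : V, G.Walk x y → b x = b y := by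
      intro x y p
      induction p with
      | nil => rfl
      | cons h q ih => exact (hb _ _ h).trans ih
    intro x y
    obtain ⟨p⟩ := hconn.preconnected x y
    exact hwalk x y p
  obtain ⟨s0, hs0⟩ := hS
  refine ⟨s0, Set.eq_singleton_iff_unique_mem.2 ⟨hs0, ?_⟩⟩
  intro s hs
  rw [← hbS s hs, ← hbS s0 hs0, hconst s s0]

end Key

section Main

variable {G : SimpleGraph V}

lemma card_cc_eq_one (hconn : G.Connected) : Nat.card G.ConnectedComponent = 1 := by
  haveI : Subsingleton G.ConnectedComponent := by
    constructor
    intro a b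
    obtain ⟨x, rfl⟩ := a.exists_rep
    obtain ⟨y, rfl⟩ := b.exists_rep
    exact ConnectedComponent.eq.2 (hconn.preconnected x y)
  haveI : Nonempty G.ConnectedComponent :=
    ⟨G.connectedComponentMk (Classical.choice hconn.nonempty)⟩
  exact Nat.card_eq_one_iff_unique.2 ⟨inferInstance, inferInstance⟩

lemma numComp_empty (hconn : G.Connected) : numComp G (∅ : Set V) = 1 := by
  unfold numComp
  rw [Set.compl_empty]
  rw [Nat.card_congr (Iso.connectedComponentEquiv (induceUnivIso G))]
  exact card_cc_eq_one hconn

end Main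

/-- Let `G` be a connected `3`-regular graph. Then `τ(G) = 1/3` if and only
if there exists a vertex `v` of `G` with `ω(G−{v}) ≥ 3` (in which case necessarily
`ω(G−{v}) = 3`). Complete graphs have toughness `∞` here. -/
theorem stmt_16 {V : Type*} [Fintype V] (G : SimpleGraph V) [DecidableRel G.Adj]
    (hconn : G.Connected) (hreg : G.IsRegularOfDegree 3) :
    (toughness G = 1 / 3 ↔ ∃ v : V, 3 ≤ numComp G {v}) ∧
    (∀ v : V, 3 ≤ numComp G {v} → numComp G {v} = 3) := by
  classical
  have hnonempty : ∀ S : Set V, IsCutset G S → S.Nonempty := by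
    intro S hS
    rw [Set.nonempty_iff_ne_empty]
    rintro rfl
    rw [IsCutset, numComp_empty hconn] at hS
    exact lt_irrefl 1 hS
  have h2 : ∀ v : V, 3 ≤ numComp G {v} → numComp G {v} = 3 := by
    intro v hv
    have hle := (key hconn hreg {v} ⟨v, rfl⟩).1
    rw [Set.ncard_singleton, mul_one] at hle
    omega
  -- the general lower bound 1/3 ≤ toughness
  have hlow : (1 / 3 : ℝ≥0∞) ≤ toughness G := by
    apply le_iInf; intro S; apply le_iInf; intro hS
    have hne := hnonempty S hS
    have hle := (key hconn hreg S hne).1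
    have hnc : S.ncard ≠ 0 := by have := (Set.ncard_pos S.toFinite).2 hne; omega
    have hnc' : (S.ncard : ℝ≥0∞) ≠ 0 := by exact_mod_cast hnc
    have hcast : (numComp G S : ℝ≥0∞) ≤ 3 * (S.ncard : ℝ≥0∞) := by
      have := (Nat.cast_le (α := ℝ≥0∞)).2 hle
      push_cast at this
      exact this
    calc (1 / 3 : ℝ≥0∞) = 1 * (S.ncard : ℝ≥0∞) / (3 * (S.ncard : ℝ≥0∞)) :=
          (ENNReal.mul_div_mul_right 1 3 hnc' (ENNReal.natCast_ne_top _)).symm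
      _ = (S.ncard : ℝ≥0∞) / (3 * (S.ncard : ℝ≥0∞)) := by rw [one_mul]
      _ ≤ (S.ncard : ℝ≥0∞) / (numComp G S : ℝ≥0∞) := ENNReal.div_le_div le_rfl hcast
  refine ⟨⟨?_, ?_⟩, h2⟩
  · -- forward direction
    intro ht
    by_cases hcut : ∃ S : Set V, IsCutset G S
    · obtain ⟨S₀, hS₀⟩ := hcut
      haveI : Nonempty {S : Set V // IsCutset G S} := ⟨⟨S₀, hS₀⟩⟩
      obtain ⟨i0, hmin⟩ := Finite.exists_min
        (fun i : {S : Set V // IsCutset G S} =>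
          ((i.1.ncard : ℝ≥0∞) / (numComp G i.1 : ℝ≥0∞)))
      obtain ⟨S, hcutS⟩ := i0
      have htv : ((S.ncard : ℝ≥0∞) / (numComp G S : ℝ≥0∞)) = 1 / 3 := by
        rw [← ht]
        apply le_antisymm
        · apply le_iInf; intro T; apply le_iInf; intro hT
          exact hmin ⟨T, hT⟩
        · exact iInf₂_le S hcutS
      have hne := hnonempty S hcutS
      have hnc : S.ncard ≠ 0 := by have := (Set.ncard_pos S.toFinite).2 hne; omega
      have hb : numComp G S ≠ 0 := by
        have := hcutS; rw [IsCutset] at this; omega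
      have hnat : numComp G S = 3 * S.ncard := by
        have h := (ENNReal.div_eq_div_iff (a := 3) (b := (numComp G S : ℝ≥0∞))
          (c := (S.ncard : ℝ≥0∞)) (d := 1)
          (by norm_num) (by norm_num)
          (by exact_mod_cast hb) (ENNReal.natCast_ne_top _)).1 htv
        rw [mul_one] at h
        have h' : ((3 * S.ncard : ℕ) : ℝ≥0∞) = ((numComp G S : ℕ) : ℝ≥0∞) := by
          push_cast
          exact h
        exact_mod_cast h'.symm
      obtain ⟨v, hSv⟩ := (key hconn hreg S hne).2 hnat
      subst hSv
      rw [Set.ncard_singleton, mul_one] at hnat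
      exact ⟨v, hnat.ge⟩
    · exfalso
      have htop : toughness G = ⊤ := by
        apply le_antisymm le_top
        apply le_iInf; intro S; apply le_iInf; intro hS
        exact absurd ⟨S, hS⟩ hcut
      rw [htop] at ht
      have : (1 / 3 : ℝ≥0∞) ≠ ⊤ := by
        simp [ENNReal.div_eq_top]
      exact this ht.symm
  · -- backward direction
    rintro ⟨v, hv⟩
    have h3 := h2 v hv
    have hcutv : IsCutset G {v} := by rw [IsCutset, h3]; norm_num
    apply le_antisymm _ hlow
    have hup : toughness G ≤ (({v} : Set V).ncard : ℝ≥0∞) / (numComp G {v} : ℝ≥0∞) := by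
      exact iInf₂_le (f := fun (S : Set V) (_ : IsCutset G S) =>
        ((S.ncard : ℝ≥0∞) / (numComp G S : ℝ≥0∞))) {v} hcutv
    refine hup.trans_eq ?_
    rw [h3, Set.ncard_singleton]
    norm_num

end Toughness
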